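/- For d ≥ k ≥ 1, Σ_𝒫 C_{a_1−1}·C_{a_2−1}⋯C_{a_k−1} = binomial(2d−k−1, d−1), where the sum is over all cyclic compositions 𝒫 of d into k parts with part sizes a_1,…,a_k. -/

import Mathlib

/-!
Rotating the cycle permutes the cyclic compositions and preserves their weights, and every
set of `k` cut edges is counted once for each of its `k` members, so `k` times the sum equals
`d` times the sum over cut sets containing `0`. Cutting the cycle at `0` turns those into the
compositions of `d` into `k` parts, whose Catalan-weighted sum is the coefficient of `x^d` in
`φ^k`, where `φ = x C(x)`. Since `φ = x + φ²`, these coefficients satisfy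
`[x^(n+1)] φ^(k+1) = [x^n] φ^k + [x^(n+1)] φ^(k+2)`, the recurrence of the ballot numbers
`binomial (2n-k-1) (n-1) - binomial (2n-k-1) n = (k/n) binomial (2n-k-1) (n-1)`.
-/

/-- A cyclic composition of `d` into `k` parts is a partition of the vertex set of the
labeled cycle `ℤ/d` into `k` blocks inducing paths; equivalently it is obtained by
deleting a set `S` of `k` of the `d` edges of the cycle (we identify the edge `{s, s+1}`
with its left endpoint `s`, so `S` is a `k`-element `Finset (ZMod d)`).  The block that
starts right after the deleted edge `s` has size `cycGap d S s`, the least `m ≥ 1` with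
`s + m ∈ S`; as `s` runs over `S` these are the part sizes `a_1, …, a_k`. -/
noncomputable def cycGap (d : ℕ) (S : Finset (ZMod d)) (s : ZMod d) : ℕ :=
  sInf {m : ℕ | 0 < m ∧ s + (m : ZMod d) ∈ S}

open Finset PowerSeries

theorem X_mul_catalanSeries_eq :
    X * catalanSeries = X + (X * catalanSeries) ^ 2 := by
  conv_lhs => rw [← catalanSeries_sq_mul_X_add_one]
  ring

theorem coeff_succ_X_mul_catalanSeries_pow_succ (k n : ℕ) :
    coeff (n + 1) ((X * catalanSeries) ^ (k + 1))
      = coeff n ((X * catalanSeries) ^ k) + coeff (n + 1) ((X * catalanSeries) ^ (k + 2)) := by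
  have hφ : (X * catalanSeries) ^ (k + 1)
      = X * (X * catalanSeries) ^ k + (X * catalanSeries) ^ (k + 2) :=
    calc (X * catalanSeries) ^ (k + 1)
        = (X * catalanSeries) ^ k * (X * catalanSeries) := pow_succ ..
      _ = (X * catalanSeries) ^ k * (X + (X * catalanSeries) ^ 2) := by
        rw [← X_mul_catalanSeries_eq]
      _ = _ := by ring
  rw [hφ, map_add, coeff_succ_X_mul]

theorem coeff_X_mul_catalanSeries_pow_succ_eq_sum (k n : ℕ) :
    coeff n ((X * catalanSeries) ^ (k + 1))
      = ∑ m ∈ range n, catalan (n - m - 1) * coeff m ((X * catalanSeries) ^ k) := by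
  cases n with
  | zero => simp [pow_succ]
  | succ n =>
    rw [pow_succ', mul_assoc, coeff_succ_X_mul, mul_comm, coeff_mul,
      Nat.sum_antidiagonal_eq_sum_range_succ (fun i j => coeff i _ * coeff j catalanSeries)]
    refine sum_congr rfl fun m _ => ?_
    rw [catalanSeries_coeff, mul_comm, show n + 1 - m - 1 = n - m by omega]

theorem coeff_X_mul_catalanSeries_pow_self (n : ℕ) :
    coeff n ((X * catalanSeries) ^ n) = 1 := by
  rw [mul_pow, coeff_X_pow_mul', if_pos le_rfl, Nat.sub_self, coeff_zero_eq_constantCoeff_apply,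
    map_pow, catalanSeries_constantCoeff, one_pow]

theorem coeff_X_mul_catalanSeries_pow_add_choose {k n : ℕ} (hkn : k ≤ n + 1) :
    coeff (n + 1) ((X * catalanSeries) ^ k) + (2 * n + 1 - k).choose (n + 1)
      = (2 * n + 1 - k).choose n := by
  induction n generalizing k with
  | zero =>
    interval_cases k <;> simp
  | succ n ih =>
    induction hkn using Nat.decreasingInduction with
    | self =>
      rw [coeff_X_mul_catalanSeries_pow_self, Nat.choose_eq_zero_of_lt (by omega),
        show 2 * (n + 1) + 1 - (n + 1 + 1) = n + 1 by omega, Nat.choose_self]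
    | of_succ k hk ih' =>
      cases k with
      | zero =>
        rw [pow_zero, coeff_one, if_neg (by omega), zero_add, Nat.sub_zero, Nat.choose_symm_half]
      | succ j =>
        have h₁ := ih (k := j) (by omega)
        have h₂ : coeff (n + 1 + 1) ((X * catalanSeries) ^ (j + 2))
            + (2 * n + 1 - j).choose (n + 1 + 1) = (2 * n + 1 - j).choose (n + 1) := by
          rwa [show 2 * n + 1 - j = 2 * (n + 1) + 1 - (j + 1 + 1) by omega]
        rw [coeff_succ_X_mul_catalanSeries_pow_succ,
          show 2 * (n + 1) + 1 - (j + 1) = 2 * n + 1 - j + 1 by omega,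
          Nat.choose_succ_succ', Nat.choose_succ_succ' _ n]
        omega

theorem mul_coeff_X_mul_catalanSeries_pow {k n : ℕ} (hkn : k ≤ n) :
    n * coeff n ((X * catalanSeries) ^ k) = k * (2 * n - k - 1).choose (n - 1) := by
  cases n with
  | zero => simp [Nat.le_zero.mp hkn]
  | succ n =>
    have hsum := coeff_X_mul_catalanSeries_pow_add_choose hkn
    have hstep := Nat.choose_succ_right_eq (2 * n + 1 - k) n
    rw [show 2 * n + 1 - k - n = n + 1 - k by omega] at hstep
    rw [show 2 * (n + 1) - k - 1 = 2 * n + 1 - k by omega, Nat.add_sub_cancel]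
    zify [hkn] at hsum hstep ⊢
    linear_combination ((n : ℤ) + 1) * hsum - hstep

theorem Nat.sInf_eq_sInf_of_forall_le_iff {X Y : Set ℕ} {c : ℕ} (hX : c ∈ X) (hY : c ∈ Y)
    (h : ∀ u ≤ c, u ∈ X ↔ u ∈ Y) : sInf X = sInf Y :=
  le_antisymm (Nat.sInf_le <| (h _ (Nat.sInf_le hY)).2 (Nat.sInf_mem ⟨c, hY⟩))
    (Nat.sInf_le <| (h _ (Nat.sInf_le hX)).1 (Nat.sInf_mem ⟨c, hX⟩))

theorem Finset.Nonempty.sup_id_mem {α : Type*} [LinearOrder α] [OrderBot α] {T : Finset α}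
    (hT : T.Nonempty) : T.sup id ∈ T := by
  obtain ⟨m, hm, hsup⟩ := exists_mem_eq_sup T hT id
  rwa [hsup]

theorem sup_id_insert_of_subset_range {m : ℕ} {T : Finset ℕ} (hT : T ⊆ range m) :
    (insert m T).sup id = m :=
  le_antisymm (Finset.sup_le fun _ ht => (mem_insert.1 ht).elim le_of_eq
    fun h => (mem_range.1 (hT h)).le) (le_sup (f := id) (mem_insert_self m T))

noncomputable def nextGap (X : Finset ℕ) (t : ℕ) : ℕ :=
  sInf {m | 0 < m ∧ t + m ∈ X}

theorem nextGap_eq {X : Finset ℕ} {t c : ℕ} (hc : 0 < c) (hmem : t + c ∈ X)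
    (hgap : ∀ m, 0 < m → m < c → t + m ∉ X) : nextGap X t = c :=
  le_antisymm (Nat.sInf_le ⟨hc, hmem⟩) <|
    le_csInf ⟨c, hc, hmem⟩ fun m ⟨hm, hmX⟩ => not_lt.1 fun hmc => hgap m hm hmc hmX

theorem nextGap_insert {X : Finset ℕ} {t x a : ℕ} (hx : x ∈ X) (htx : t < x) (hxa : x ≤ a) :
    nextGap (insert a X) t = nextGap X t := by
  refine Nat.sInf_eq_sInf_of_forall_le_iff (c := x - t) ⟨by omega, ?_⟩ ⟨by omega, ?_⟩ ?_
  · rw [Nat.add_sub_cancel' htx.le]; exact mem_insert_of_mem hx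
  · rwa [Nat.add_sub_cancel' htx.le]
  · intro u hu
    simp only [Set.mem_ofPred_eq, mem_insert]
    constructor
    · rintro ⟨hu0, rfl | h⟩
      · obtain rfl : x = t + u := by omega
        exact ⟨hu0, hx⟩
      · exact ⟨hu0, h⟩
    · exact fun ⟨hu0, h⟩ => ⟨hu0, Or.inr h⟩

/-- A composition of `n` into `k` parts is coded by the set `T` of first elements of its blocks,
which are consecutive intervals covering `range n`; the block starting at `t ∈ T` has
`nextGap (insert n T) t` elements. -/
def compositionStarts (k n : ℕ) : Finset (Finset ℕ) :=
  {T ∈ (range n).powersetCard k | 0 ∈ T}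

noncomputable def catalanWeight (n : ℕ) (T : Finset ℕ) : ℕ :=
  ∏ t ∈ T, catalan (nextGap (insert n T) t - 1)

noncomputable def compositionCatalanSum (k n : ℕ) : ℕ :=
  ∑ T ∈ compositionStarts k n, catalanWeight n T

theorem mem_compositionStarts {k n : ℕ} {T : Finset ℕ} :
    T ∈ compositionStarts k n ↔ T ⊆ range n ∧ #T = k ∧ 0 ∈ T := by
  rw [compositionStarts, mem_filter, mem_powersetCard, and_assoc]

theorem catalanWeight_insert {m n : ℕ} {T : Finset ℕ} (hT : T ⊆ range m) (hmn : m < n) :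
    catalanWeight n (insert m T) = catalan (n - m - 1) * catalanWeight m T := by
  have hmT : m ∉ T := fun h => (mem_range.1 (hT h)).false
  have hlast : nextGap (insert n (insert m T)) m = n - m := by
    refine nextGap_eq (by omega) (by simp [Nat.add_sub_cancel' hmn.le]) fun u hu hun hmem => ?_
    obtain h | h | h := mem_insert.1 hmem |>.imp_right mem_insert.1
    · omega
    · omega
    · exact absurd (mem_range.1 (hT h)) (by omega)
  rw [catalanWeight, prod_insert hmT, hlast, catalanWeight, Nat.sub_right_comm]
  congr 1
  refine prod_congr rfl fun t ht => ?_
  rw [nextGap_insert (mem_insert_self m T) (mem_range.1 (hT ht)) hmn.le]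

theorem compositionCatalanSum_one (n : ℕ) :
    compositionCatalanSum 1 n = coeff n (X * catalanSeries) := by
  cases n with
  | zero =>
    simp [compositionCatalanSum, compositionStarts]
  | succ n =>
    have hstarts : compositionStarts 1 (n + 1) = {{0}} := by
      ext T
      simp only [mem_compositionStarts, card_eq_one, mem_singleton]
      constructor
      · rintro ⟨-, ⟨a, rfl⟩, h0⟩
        rw [mem_singleton.1 h0]
      · rintro rfl
        simp
    rw [compositionCatalanSum, hstarts, sum_singleton, ← insert_empty_eq,
      catalanWeight_insert (empty_subset _) n.succ_pos, coeff_succ_X_mul,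
      catalanSeries_coeff, catalanWeight, prod_empty, mul_one]
    rfl

theorem insert_mem_compositionStarts {k m n : ℕ} {T : Finset ℕ} (hmn : m < n)
    (hT : T ∈ compositionStarts k m) : insert m T ∈ compositionStarts (k + 1) n := by
  obtain ⟨hsub, hcard, h0⟩ := mem_compositionStarts.1 hT
  have hmT : m ∉ T := fun h => (mem_range.1 (hsub h)).false
  refine mem_compositionStarts.2 ⟨insert_subset (mem_range.2 hmn) ?_, ?_, mem_insert_of_mem h0⟩
  · exact hsub.trans (range_subset_range.2 hmn.le)
  · rw [card_insert_of_notMem hmT, hcard]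

theorem erase_sup_id_mem_compositionStarts {k n : ℕ} {T : Finset ℕ} (hk : 0 < k)
    (hT : T ∈ compositionStarts (k + 1) n) :
    T.sup id < n ∧ T.erase (T.sup id) ∈ compositionStarts k (T.sup id) := by
  obtain ⟨hsub, hcard, h0⟩ := mem_compositionStarts.1 hT
  have hmem := Finset.Nonempty.sup_id_mem ⟨0, h0⟩
  have hle : ∀ t ∈ T, t ≤ T.sup id := fun t ht => le_sup (f := id) ht
  refine ⟨mem_range.1 (hsub hmem), mem_compositionStarts.2 ⟨fun t ht => ?_, ?_, ?_⟩⟩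
  · exact mem_range.2 (lt_of_le_of_ne (hle t (mem_of_mem_erase ht)) (ne_of_mem_erase ht))
  · rw [card_erase_of_mem hmem, hcard, Nat.add_sub_cancel]
  · refine mem_erase.2 ⟨fun h => ?_, h0⟩
    have : T ⊆ {0} := fun t ht => mem_singleton.2 (by have := hle t ht; omega)
    have := card_le_card this
    simp only [card_singleton] at this
    omega

theorem compositionCatalanSum_succ {k : ℕ} (hk : 0 < k) (n : ℕ) :
    compositionCatalanSum (k + 1) n
      = ∑ m ∈ range n, catalan (n - m - 1) * compositionCatalanSum k m := by
  simp only [compositionCatalanSum, mul_sum]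
  rw [sum_sigma']
  symm
  refine sum_nbij' (fun p => insert p.1 p.2) (fun T => ⟨T.sup id, T.erase (T.sup id)⟩)
    (fun p hp => ?_) (fun T hT => ?_) (fun p hp => ?_) (fun T hT => ?_) (fun p hp => ?_)
  · obtain ⟨hm, hT⟩ := mem_sigma.1 hp
    exact insert_mem_compositionStarts (mem_range.1 hm) hT
  · obtain ⟨hlt, hT'⟩ := erase_sup_id_mem_compositionStarts hk hT
    exact mem_sigma.2 ⟨mem_range.2 hlt, hT'⟩
  · obtain ⟨hm, hT⟩ := mem_sigma.1 hp
    have hsub := (mem_compositionStarts.1 hT).1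
    simp only [sup_id_insert_of_subset_range hsub,
      erase_insert fun h => (mem_range.1 (hsub h)).false]
  · exact insert_erase (Finset.Nonempty.sup_id_mem ⟨0, (mem_compositionStarts.1 hT).2.2⟩)
  · obtain ⟨hm, hT⟩ := mem_sigma.1 hp
    exact (catalanWeight_insert (mem_compositionStarts.1 hT).1 (mem_range.1 hm)).symm

theorem compositionCatalanSum_eq_coeff {k : ℕ} (hk : 0 < k) (n : ℕ) :
    compositionCatalanSum k n = coeff n ((X * catalanSeries) ^ k) := by
  induction k, hk using Nat.le_induction generalizing n with
  | base => rw [pow_one, compositionCatalanSum_one]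
  | succ k hk ih =>
    rw [compositionCatalanSum_succ hk, coeff_X_mul_catalanSeries_pow_succ_eq_sum]
    simp only [ih]

section Translation

variable {G M : Type*} [AddGroup G] [Fintype G] [DecidableEq G] [AddCommMonoid M]

theorem sum_powersetCard_filter_mem_eq (f : Finset G → M)
    (hf : ∀ S c, f (S.map (Equiv.addRight c).toEmbedding) = f S) (k : ℕ) (c : G) :
    ∑ S ∈ univ.powersetCard k with c ∈ S, f S
      = ∑ S ∈ univ.powersetCard k with 0 ∈ S, f S := by
  refine sum_equiv (Equiv.addRight (-c)).finsetCongr (fun S => ?_) fun S _ => (hf S (-c)).symm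
  simp [Equiv.finsetCongr_apply, mem_map_equiv]

theorem card_smul_sum_powersetCard (f : Finset G → M)
    (hf : ∀ S c, f (S.map (Equiv.addRight c).toEmbedding) = f S) (k : ℕ) :
    k • ∑ S ∈ univ.powersetCard k, f S
      = Fintype.card G • ∑ S ∈ univ.powersetCard k with 0 ∈ S, f S := by
  calc k • ∑ S ∈ univ.powersetCard k, f S
      = ∑ S ∈ univ.powersetCard k, ∑ _s ∈ S, f S := by
        rw [smul_sum]
        refine sum_congr rfl fun S hS => ?_
        rw [sum_const, (mem_powersetCard_univ.1 hS)]
    _ = ∑ s : G, ∑ S ∈ univ.powersetCard k with s ∈ S, f S :=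
        sum_comm' fun S s => by simp [and_comm]
    _ = Fintype.card G • ∑ S ∈ univ.powersetCard k with 0 ∈ S, f S := by
        simp only [sum_powersetCard_filter_mem_eq f hf, sum_const, card_univ]

end Translation

theorem cycGap_map_addRight (d : ℕ) (S : Finset (ZMod d)) (s c : ZMod d) :
    cycGap d (S.map (Equiv.addRight c).toEmbedding) (s + c) = cycGap d S s := by
  simp only [cycGap, mem_map_equiv, Equiv.addRight_symm, Equiv.coe_addRight,
    add_right_comm s c, add_neg_cancel_right]

theorem prod_catalan_cycGap_map_addRight (d : ℕ) (S : Finset (ZMod d)) (c : ZMod d) :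
    ∏ s ∈ S.map (Equiv.addRight c).toEmbedding,
        catalan (cycGap d (S.map (Equiv.addRight c).toEmbedding) s - 1)
      = ∏ s ∈ S, catalan (cycGap d S s - 1) := by
  simp only [prod_map, Equiv.coe_toEmbedding, Equiv.coe_addRight, cycGap_map_addRight]

section Linearization

variable (d : ℕ) [NeZero d]

def ZMod.valEmbedding : ZMod d ↪ ℕ := ⟨ZMod.val, ZMod.val_injective d⟩

theorem ZMod.map_univ_valEmbedding : univ.map (ZMod.valEmbedding d) = range d := by
  ext n
  simp only [mem_map, mem_univ, true_and, mem_range, ZMod.valEmbedding,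
    Function.Embedding.coeFn_mk]
  exact ⟨fun ⟨a, ha⟩ => ha ▸ ZMod.val_lt a, fun h => ⟨n, ZMod.val_cast_of_lt h⟩⟩

theorem cycGap_eq_nextGap {S : Finset (ZMod d)} (h0 : 0 ∈ S) (s : ZMod d) :
    cycGap d S s = nextGap (insert d (S.map (ZMod.valEmbedding d))) s.val := by
  have hs := ZMod.val_lt s
  have hcast (u : ℕ) : s + (u : ZMod d) = ((s.val + u : ℕ) : ZMod d) := by
    rw [Nat.cast_add, ZMod.natCast_zmod_val]
  refine Nat.sInf_eq_sInf_of_forall_le_iff (c := d - s.val) ⟨by omega, ?_⟩ ⟨by omega, ?_⟩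
    fun u hu => and_congr_right fun _ => ?_
  · rwa [hcast, Nat.add_sub_cancel' hs.le, ZMod.natCast_self]
  · simp [Nat.add_sub_cancel' hs.le]
  · rcases hu.lt_or_eq with hu | rfl
    · have hlt : s.val + u < d := by omega
      rw [hcast, mem_insert, mem_map, or_iff_right hlt.ne]
      refine ⟨fun h => ⟨_, h, ZMod.val_cast_of_lt hlt⟩, fun ⟨x, hx, hxu⟩ => ?_⟩
      rwa [← show x = ((s.val + u : ℕ) : ZMod d) from ZMod.val_injective d
        (hxu.trans (ZMod.val_cast_of_lt hlt).symm)]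
    · simp only [hcast, Nat.add_sub_cancel' hs.le, ZMod.natCast_self, h0, mem_insert, true_or]

theorem sum_filter_zero_mem_eq_compositionCatalanSum (k : ℕ) :
    ∑ S ∈ univ.powersetCard k with 0 ∈ S, ∏ s ∈ S, catalan (cycGap d S s - 1)
      = compositionCatalanSum k d := by
  rw [compositionCatalanSum, compositionStarts, ← ZMod.map_univ_valEmbedding, powersetCard_map,
    filter_map, sum_map]
  symm
  refine sum_congr (filter_congr fun S _ => ?_) fun S hS => ?_
  · simp [ZMod.valEmbedding]
  · change catalanWeight d (S.map (ZMod.valEmbedding d)) = _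
    rw [catalanWeight, prod_map]
    exact prod_congr rfl fun s _ => by rw [cycGap_eq_nextGap d (mem_filter.1 hS).2]; rfl

end Linearization

/-- For `d ≥ k ≥ 1`, `Σ_𝒫 C_{a_1-1} ⋯ C_{a_k-1} = binomial (2d-k-1) (d-1)`, where the
sum ranges over all cyclic compositions `𝒫` of `d` into `k` parts. -/
theorem cyclic_composition_catalan_sum (d k : ℕ) [NeZero d] (hk : 1 ≤ k) (hkd : k ≤ d) :
    ∑ S ∈ (Finset.univ : Finset (ZMod d)).powersetCard k,
        ∏ s ∈ S, catalan (cycGap d S s - 1)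
      = (2 * d - k - 1).choose (d - 1) := by
  refine Nat.eq_of_mul_eq_mul_left hk ?_
  calc k * ∑ S ∈ univ.powersetCard k, ∏ s ∈ S, catalan (cycGap d S s - 1)
      = d * ∑ S ∈ univ.powersetCard k with 0 ∈ S,
          ∏ s ∈ S, catalan (cycGap d S s - 1) := by
        simpa using card_smul_sum_powersetCard (fun S => ∏ s ∈ S, catalan (cycGap d S s - 1))
          (prod_catalan_cycGap_map_addRight d) k
    _ = d * coeff d ((X * catalanSeries) ^ k) := by
        rw [sum_filter_zero_mem_eq_compositionCatalanSum, compositionCatalanSum_eq_coeff hk]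
    _ = k * (2 * d - k - 1).choose (d - 1) := mul_coeff_X_mul_catalanSeries_pow hkd
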